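/- The construction-based consequence relation ⊨c is not complete for intuitionistic logic: p → q ∨ r ⊨c (p → q) ∨ (p → r) holds, but p → q ∨ r ⊬_IL (p → q) ∨ (p → r). -/
import Mathlib


/-- Propositional atoms: `⊥` and countably many atoms `p n`. -/
inductive PAtom : Type
  | bot
  | p (n : ℕ)
deriving DecidableEq

/-- Formulas of the propositional language. -/
inductive Formula : Type
  | atom (a : PAtom)
  | and (A B : Formula)
  | or (A B : Formula)
  | imp (A B : Formula)
deriving DecidableEq

/-- Higher-level atomic rules: a rule has a list of premises, each of which may
discharge a list of lower-level rules, and has an atomic conclusion.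
A level-0 rule (axiom) is `mk [] a`. -/
inductive AtomicRule : Type
  | mk (prems : List (List AtomicRule × PAtom)) (concl : PAtom)

/-- The atomic explosion rules: from `⊥` infer any atom. -/
def AE : Set AtomicRule := { r | ∃ a, r = AtomicRule.mk [([], PAtom.bot)] a }

/-- An atomic base is a set of atomic rules containing atomic explosion. -/
def IsBase (B : Set AtomicRule) : Prop := AE ⊆ B

/-- Atomic derivability: `Der B Γ a` means the atom `a` is derivable from the assumed
atoms in `Γ` using the rules of `B` (rules discharged by an application of a
higher-level rule are temporarily added to the base). -/
inductive Der : Set AtomicRule → Set PAtom → PAtom → Prop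
  | assum {B : Set AtomicRule} {Γ : Set PAtom} {a : PAtom} : a ∈ Γ → Der B Γ a
  | app {B : Set AtomicRule} {Γ : Set PAtom} (prems : List (List AtomicRule × PAtom)) (a : PAtom) :
      AtomicRule.mk prems a ∈ B →
      (∀ pr ∈ prems, Der (B ∪ { r | r ∈ pr.1 }) Γ pr.2) →
      Der B Γ a

/-- The miB-eS forcing relation `⊩_B A` (consequence with empty antecedent):
atoms by atomic derivability, `∧` by both conjuncts, `∨` by one disjunct,
`→` by consequence over all extensions of the base. -/
def Force : Set AtomicRule → Formula → Prop
  | B, .atom a => Der B ∅ a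
  | B, .and A C => Force B A ∧ Force B C
  | B, .or A C => Force B A ∨ Force B C
  | B, .imp A C => ∀ X : Set AtomicRule, B ⊆ X → Force X A → Force X C

/-- The miB-eS consequence relation `Γ ⊩_B A`. -/
def Cons (B : Set AtomicRule) (Γ : Finset Formula) (A : Formula) : Prop :=
  if Γ = ∅ then Force B A
  else ∀ X : Set AtomicRule, B ⊆ X → (∀ G ∈ Γ, Force X G) → Force X A

/-- Intuitionistic propositional natural deduction. -/
inductive IL : Finset Formula → Formula → Prop
  | hyp {Γ : Finset Formula} {A : Formula} : A ∈ Γ → IL Γ A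
  | andI {Γ : Finset Formula} {A B : Formula} : IL Γ A → IL Γ B → IL Γ (A.and B)
  | andE1 {Γ : Finset Formula} {A B : Formula} : IL Γ (A.and B) → IL Γ A
  | andE2 {Γ : Finset Formula} {A B : Formula} : IL Γ (A.and B) → IL Γ B
  | orI1 {Γ : Finset Formula} {A B : Formula} : IL Γ A → IL Γ (A.or B)
  | orI2 {Γ : Finset Formula} {A B : Formula} : IL Γ B → IL Γ (A.or B)
  | orE {Γ : Finset Formula} {A B C : Formula} :
      IL Γ (A.or B) → IL (insert A Γ) C → IL (insert B Γ) C → IL Γ C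
  | impI {Γ : Finset Formula} {A B : Formula} : IL (insert A Γ) B → IL Γ (A.imp B)
  | impE {Γ : Finset Formula} {A B : Formula} : IL Γ (A.imp B) → IL Γ A → IL Γ B
  | botE {Γ : Finset Formula} {A : Formula} : IL Γ (Formula.atom PAtom.bot) → IL Γ A

/-- Prawitz-1971-style constructions of a formula on an atomic base:
a construction of an atom is (a witness of) an atomic derivation of it in the base;
a construction of a conjunction is a pair of constructions; a construction of a
disjunction is a tagged construction of one disjunct; a construction of an
implication `A → C` on `B` maps, for every extension `X ⊇ B`, constructions of `A`
on `X` to constructions of `C` on `X`. -/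
def Constr : Formula → Set AtomicRule → Type
  | .atom a, B => PLift (Der B ∅ a)
  | .and A C, B => Constr A B × Constr C B
  | .or A C, B => Constr A B ⊕ Constr C B
  | .imp A C, B => ∀ X : Set AtomicRule, B ⊆ X → Constr A X → Constr C X

/-- Base-monotonicity of atomic derivability. -/
lemma der_mono_base {B B' : Set AtomicRule} {Γ : Set PAtom} {a : PAtom}
    (h : Der B Γ a) (hs : B ⊆ B') : Der B' Γ a := by
  induction h generalizing B' with
  | assum h => exact Der.assum h
  | app prems a hm _ ih =>
    exact Der.app prems a (hs hm)
      (fun pr hpr => ih pr hpr (Set.union_subset_union_left _ hs))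

/-- Context-monotonicity of atomic derivability. -/
lemma der_mono_ctx {B : Set AtomicRule} {Γ Γ' : Set PAtom} {a : PAtom}
    (h : Der B Γ a) (hs : Γ ⊆ Γ') : Der B Γ' a := by
  induction h with
  | assum h => exact Der.assum (hs h)
  | app prems a hm _ ih => exact Der.app prems a hm (fun pr hpr => ih pr hpr hs)

/-- Substitution: uses of an added axiom `p0` can be replaced by a derivation of `p0`. -/
lemma der_subst {p0 : PAtom} {B' : Set AtomicRule} {Γ : Set PAtom} {a : PAtom}
    (h : Der B' Γ a) :
    ∀ B : Set AtomicRule, B' = B ∪ {AtomicRule.mk [] p0} → Der B ∅ p0 → Der B Γ a := by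
  induction h with
  | assum h => exact fun B _ _ => Der.assum h
  | app prems a hm _ ih =>
    intro B hBeq hp0
    subst hBeq
    rcases hm with hm | hm
    · refine Der.app prems a hm (fun pr hpr => ?_)
      refine ih pr hpr (B ∪ { r | r ∈ pr.1 }) ?_
        (der_mono_base hp0 Set.subset_union_left)
      ext x; simp [Set.mem_union]; tauto
    · rw [Set.mem_singleton_iff] at hm
      injection hm with h1 h2
      subst h1; subst h2
      exact der_mono_ctx hp0 (Set.empty_subset _)

/-- Kripke countermodel: three worlds `0 ≤ 1`, `0 ≤ 2`; world 1 forces `p, q`,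
world 2 forces `p, r`. -/
def Sem (np nq nr : ℕ) : Formula → Fin 3 → Prop
  | .atom PAtom.bot, _ => False
  | .atom (PAtom.p n), w => (w = 1 ∧ (n = nq ∨ n = np)) ∨ (w = 2 ∧ (n = nr ∨ n = np))
  | .and A B, w => Sem np nq nr A w ∧ Sem np nq nr B w
  | .or A B, w => Sem np nq nr A w ∨ Sem np nq nr B w
  | .imp A B, w => ∀ v, (w = 0 ∨ w = v) → Sem np nq nr A v → Sem np nq nr B v

lemma sem_mono (np nq nr : ℕ) :
    ∀ (A : Formula) (w v : Fin 3), (w = 0 ∨ w = v) → Sem np nq nr A w → Sem np nq nr A v := by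
  intro A
  induction A with
  | atom a =>
    intro w v hwv h
    cases a with
    | bot => exact h.elim
    | p n =>
      rcases hwv with rfl | rfl
      · rcases h with ⟨h, _⟩ | ⟨h, _⟩ <;> exact absurd h (by decide)
      · exact h
  | and A B ihA ihB => exact fun w v hwv h => ⟨ihA w v hwv h.1, ihB w v hwv h.2⟩
  | or A B ihA ihB =>
    exact fun w v hwv h => h.elim (fun h => Or.inl (ihA w v hwv h))
      (fun h => Or.inr (ihB w v hwv h))
  | imp A B ihA ihB =>
    intro w v hwv h u hvu hA
    refine h u ?_ hA
    rcases hwv with rfl | rfl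
    · exact Or.inl rfl
    · exact hvu

lemma sem_sound (np nq nr : ℕ) {Γ : Finset Formula} {A : Formula} (h : IL Γ A) :
    ∀ w : Fin 3, (∀ G ∈ Γ, Sem np nq nr G w) → Sem np nq nr A w := by
  induction h with
  | hyp hA => exact fun w hΓ => hΓ _ hA
  | andI _ _ ih1 ih2 => exact fun w hΓ => ⟨ih1 w hΓ, ih2 w hΓ⟩
  | andE1 _ ih => exact fun w hΓ => (ih w hΓ).1
  | andE2 _ ih => exact fun w hΓ => (ih w hΓ).2
  | orI1 _ ih => exact fun w hΓ => Or.inl (ih w hΓ)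
  | orI2 _ ih => exact fun w hΓ => Or.inr (ih w hΓ)
  | orE _ _ _ ih ih1 ih2 =>
    intro w hΓ
    rcases ih w hΓ with h | h
    · refine ih1 w (fun G hG => ?_)
      rcases Finset.mem_insert.mp hG with rfl | hG
      · exact h
      · exact hΓ _ hG
    · refine ih2 w (fun G hG => ?_)
      rcases Finset.mem_insert.mp hG with rfl | hG
      · exact h
      · exact hΓ _ hG
  | impI _ ih =>
    intro w hΓ v hwv hA
    refine ih v (fun G hG => ?_)
    rcases Finset.mem_insert.mp hG with rfl | hG
    · exact hA
    · exact sem_mono np nq nr G w v hwv (hΓ _ hG)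
  | impE _ _ ih1 ih2 =>
    intro w hΓ
    exact ih1 w hΓ w (Or.inr rfl) (ih2 w hΓ)
  | botE _ ih => exact fun w hΓ => (ih w hΓ).elim

/-- incompleteness of intuitionistic logic over the construction-based
consequence relation `⊨c`: `p → q ∨ r ⊨c (p → q) ∨ (p → r)` holds, but
`p → q ∨ r ⊬_IL (p → q) ∨ (p → r)`, for distinct atoms `p, q, r`. -/
theorem IL_incomplete_over_constructions (np nq nr : ℕ)
    (hpq : np ≠ nq) (hpr : np ≠ nr) (hqr : nq ≠ nr) :
    Nonempty (∀ B : Set AtomicRule, IsBase B → ∀ X : Set AtomicRule, B ⊆ X →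
      Constr ((Formula.atom (PAtom.p np)).imp
        ((Formula.atom (PAtom.p nq)).or (Formula.atom (PAtom.p nr)))) X →
      Constr (((Formula.atom (PAtom.p np)).imp (Formula.atom (PAtom.p nq))).or
        ((Formula.atom (PAtom.p np)).imp (Formula.atom (PAtom.p nr)))) X) ∧
    ¬ IL {(Formula.atom (PAtom.p np)).imp
            ((Formula.atom (PAtom.p nq)).or (Formula.atom (PAtom.p nr)))}
        (((Formula.atom (PAtom.p np)).imp (Formula.atom (PAtom.p nq))).or
          ((Formula.atom (PAtom.p np)).imp (Formula.atom (PAtom.p nr)))) := by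
  constructor
  · -- Part 1: the construction-based consequence holds.
    refine ⟨fun B _ X _ f => ?_⟩
    set rp : AtomicRule := AtomicRule.mk [] (PAtom.p np) with hrp
    have derp : Der (X ∪ {rp}) ∅ (PAtom.p np) :=
      Der.app [] (PAtom.p np) (Or.inr rfl) (by simp)
    exact match f (X ∪ {rp}) Set.subset_union_left ⟨derp⟩ with
    | Sum.inl c => Sum.inl (fun Y hXY d =>
        ⟨der_subst (der_mono_base c.down (Set.union_subset_union_left _ hXY)) Y rfl d.down⟩)
    | Sum.inr c => Sum.inr (fun Y hXY d =>
        ⟨der_subst (der_mono_base c.down (Set.union_subset_union_left _ hXY)) Y rfl d.down⟩)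
  · -- Part 2: underivability in IL, via the Kripke countermodel.
    intro h
    have hs := sem_sound np nq nr h 0 (by
      intro G hG
      rcases Finset.mem_singleton.mp hG with rfl
      intro v _ hp
      rcases hp with ⟨rfl, _⟩ | ⟨rfl, _⟩
      · exact Or.inl (Or.inl ⟨rfl, Or.inl rfl⟩)
      · exact Or.inr (Or.inr ⟨rfl, Or.inl rfl⟩))
    rcases hs with hs | hs
    · have := hs 2 (Or.inl rfl) (Or.inr ⟨rfl, Or.inr rfl⟩)
      rcases this with ⟨h2, _⟩ | ⟨_, h2 | h2⟩
      · exact absurd h2 (by decide)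
      · exact hqr h2
      · exact hpq h2.symm
    · have := hs 1 (Or.inl rfl) (Or.inl ⟨rfl, Or.inr rfl⟩)
      rcases this with ⟨_, h2 | h2⟩ | ⟨h2, _⟩
      · exact hqr h2.symm
      · exact hpr h2.symm
      · exact absurd h2 (by decide)
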